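/- With notation as in the 3×3-diagram of inclusions with d∘d = 0, the homology of E₁^C → E₁^E → E₁^G at the middle term is isomorphic to E^E_∞ = Im(H(B→E→H) → H(C→F→I)) / Im(H(A→D→G) → H(C→F→I)). -/

import Mathlib

/-! The `3×3`-lemma setup underlying the construction of a spectral sequence:
a commutative `3×3` diagram of `R`-modules whose rows are inclusions
`A ↪ B ↪ C`, `D ↪ E ↪ F`, `G ↪ H ↪ I` and whose columns carry differentials
`d : C → F → I` with `d ∘ d = 0`, restricting to the submodule towers.
We realise the top row as submodules `A ≤ B` of `M₁ = C`, the middle row as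
`D ≤ E` of `M₂ = F`, and the bottom row as `G ≤ H` of `M₃ = I`, with
differentials `f : M₁ → M₂`, `g : M₂ → M₃`. -/

namespace TT

variable {R : Type} [CommRing R]
variable {M₁ M₂ M₃ : Type}
variable [AddCommGroup M₁] [AddCommGroup M₂] [AddCommGroup M₃]
variable [Module R M₁] [Module R M₂] [Module R M₃]
variable (f : M₁ →ₗ[R] M₂) (g : M₂ →ₗ[R] M₃)
variable (A B : Submodule R M₁) (D E : Submodule R M₂) (G H : Submodule R M₃)

/-- `B/A`. -/
abbrev QB : Type := ↥B ⧸ (A.comap B.subtype)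

/-- `E/D`. -/
abbrev QE : Type := ↥E ⧸ (D.comap E.subtype)

/-- `H/G`. -/
abbrev QH : Type := ↥H ⧸ (G.comap H.subtype)

/-- The map `B/A → E/D` induced by `d`. -/
noncomputable def phi (hfB : ∀ x ∈ B, f x ∈ E) (hfA : ∀ x ∈ A, f x ∈ D) :
    QB A B →ₗ[R] QE D E :=
  Submodule.mapQ _ _ (f.restrict hfB) (fun x hx => hfA x.1 hx)

/-- The map `E/D → H/G` induced by `d`. -/
noncomputable def psi (hgE : ∀ x ∈ E, g x ∈ H) (hgD : ∀ x ∈ D, g x ∈ G) :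
    QE D E →ₗ[R] QH G H :=
  Submodule.mapQ _ _ (g.restrict hgE) (fun x hx => hgD x.1 hx)

/-- `E₁ᴱ = H(B/A → E/D → H/G)`, the homology of the middle column of the
quotient complex. -/
abbrev E1E (hfB : ∀ x ∈ B, f x ∈ E) (hfA : ∀ x ∈ A, f x ∈ D)
    (hgE : ∀ x ∈ E, g x ∈ H) (hgD : ∀ x ∈ D, g x ∈ G) : Type :=
  ↥(LinearMap.ker (psi g D E G H hgE hgD)) ⧸
    ((LinearMap.range (phi f A B D E hfB hfA)).comap
      (LinearMap.ker (psi g D E G H hgE hgD)).subtype)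

/-- The map `C/B → F/E` induced by `d`. -/
noncomputable def fCB (hfB : ∀ x ∈ B, f x ∈ E) : (M₁ ⧸ B) →ₗ[R] (M₂ ⧸ E) :=
  Submodule.mapQ B E f hfB

/-- `E₁ᶜ = H(0 → C/B → F/E) = ker(C/B → F/E)`. -/
abbrev E1C (hfB : ∀ x ∈ B, f x ∈ E) : Type :=
  ↥(LinearMap.ker (fCB f B E hfB))

/-- `E₁ᴳ = H(D → G → 0) = G / im(D → G)`. -/
abbrev E1G : Type := ↥G ⧸ ((D.map g).comap G.subtype)

end TT


namespace TT

variable {R : Type} [CommRing R]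
variable {M₁ M₂ M₃ : Type}
variable [AddCommGroup M₁] [AddCommGroup M₂] [AddCommGroup M₃]
variable [Module R M₁] [Module R M₂] [Module R M₃]
variable (f : M₁ →ₗ[R] M₂) (g : M₂ →ₗ[R] M₃)
variable (A B : Submodule R M₁) (D E : Submodule R M₂) (G H : Submodule R M₃)

/-- `H(C → F → I) = ker g / im f`. -/
abbrev HCFI : Type :=
  ↥(LinearMap.ker g) ⧸
    ((LinearMap.range f).comap (LinearMap.ker g).subtype)

/-- The image of `H(B → E → H)` in `H(C → F → I)`: classes of cycles lying
in `E`. -/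
noncomputable def S1 : Submodule R (HCFI f g) :=
  Submodule.map (Submodule.mkQ _) (E.comap (LinearMap.ker g).subtype)

/-- The image of `H(A → D → G)` in `H(C → F → I)`: classes of cycles lying
in `D`. -/
noncomputable def S2 : Submodule R (HCFI f g) :=
  Submodule.map (Submodule.mkQ _) (D.comap (LinearMap.ker g).subtype)

/-- `E^E_∞ = Im(H(B→E→H) → H(C→F→I)) / Im(H(A→D→G) → H(C→F→I))`. -/
abbrev Einfty : Type :=
  ↥(S1 f g E) ⧸ ((S2 f g D).comap (S1 f g E).subtype)

end TT

/-! Both sides are quotients of the cycles `E ∩ ker d`. With `E₁ᴱ = (E ∩ d⁻¹G) / (D + dB)`, a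
class in `ker δE` is represented by some `y` with `d y = d x` for an `x ∈ D`, and then the cycle
`y - x` represents the same class; on the `E∞` side every class is a cycle class by definition.
In both cases a cycle represents zero exactly when it lies in `D + dC`. -/

theorem LinearMap.nonempty_linearEquiv_of_surjective_of_ker_eq {R P X Y : Type*} [Ring R]
    [AddCommGroup P] [AddCommGroup X] [AddCommGroup Y] [Module R P] [Module R X] [Module R Y]
    (u : P →ₗ[R] X) (v : P →ₗ[R] Y) (hu : Function.Surjective u) (hv : Function.Surjective v)
    (h : LinearMap.ker u = LinearMap.ker v) : Nonempty (X ≃ₗ[R] Y) :=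
  ⟨(u.quotKerEquivOfSurjective hu).symm ≪≫ₗ Submodule.quotEquivOfEq _ _ h ≪≫ₗ
    v.quotKerEquivOfSurjective hv⟩

namespace TT

open Submodule LinearMap

variable {R : Type} [CommRing R]
variable {M₁ M₂ M₃ : Type}
variable [AddCommGroup M₁] [AddCommGroup M₂] [AddCommGroup M₃]
variable [Module R M₁] [Module R M₂] [Module R M₃]
variable (f : M₁ →ₗ[R] M₂) (g : M₂ →ₗ[R] M₃)
variable (A B : Submodule R M₁) (D E : Submodule R M₂) (G H : Submodule R M₃)
variable (hfB : ∀ x ∈ B, f x ∈ E) (hfA : ∀ x ∈ A, f x ∈ D)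
variable (hgE : ∀ x ∈ E, g x ∈ H) (hgD : ∀ x ∈ D, g x ∈ G)

theorem mk_mem_ker_psi_iff (y : E) :
    (Submodule.Quotient.mk y : QE D E) ∈ ker (psi g D E G H hgE hgD) ↔ g y ∈ G :=
  Quotient.mk_eq_zero _

noncomputable def toE1E : ↥(E ⊓ G.comap g) →ₗ[R] E1E f g A B D E G H hfB hfA hgE hgD :=
  (mkQ _).comp <| codRestrict _ ((mkQ _).comp (inclusion inf_le_left)) fun y =>
    (mk_mem_ker_psi_iff g D E G H hgE hgD _).2 y.2.2

theorem toE1E_surjective : Function.Surjective (toE1E f g A B D E G H hfB hfA hgE hgD) := by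
  intro q
  obtain ⟨⟨y, hy⟩, rfl⟩ := mkQ_surjective _ q
  obtain ⟨⟨y, hyE⟩, rfl⟩ := mkQ_surjective _ y
  exact ⟨⟨y, hyE, (mk_mem_ker_psi_iff g D E G H hgE hgD _).1 hy⟩, rfl⟩

theorem toE1E_eq_zero_iff (y : ↥(E ⊓ G.comap g)) :
    toE1E f g A B D E G H hfB hfA hgE hgD y = 0 ↔ (y : M₂) ∈ D ⊔ B.map f := by
  rw [toE1E, comp_apply, mkQ_apply, Quotient.mk_eq_zero, mem_comap, mem_sup]
  constructor
  · rintro ⟨b, hb⟩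
    obtain ⟨b, rfl⟩ := mkQ_surjective _ b
    have hbD : f b - y ∈ D := (Submodule.Quotient.eq (D.comap E.subtype)).1 hb
    exact ⟨y - f b, by simpa using D.neg_mem hbD, f b, mem_map_of_mem b.2, sub_add_cancel _ _⟩
  · rintro ⟨x, hx, _, ⟨b, hb, rfl⟩, hy⟩
    refine ⟨Submodule.Quotient.mk ⟨b, hb⟩, (Submodule.Quotient.eq _).2 ?_⟩
    change f b - y ∈ D
    simpa [← hy] using D.neg_mem hx

noncomputable def toE1G : ↥(E ⊓ G.comap g) →ₗ[R] E1G g D G :=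
  (mkQ _).comp (g.restrict fun _ hy => hy.2)

theorem toE1G_eq_zero_iff (y : ↥(E ⊓ G.comap g)) :
    toE1G g D E G y = 0 ↔ ∃ x ∈ D, g x = g y := by
  rw [toE1G, comp_apply, mkQ_apply, Quotient.mk_eq_zero, mem_comap]
  rfl

noncomputable def toE1C : ↥(E.comap f) →ₗ[R] E1C f B E hfB :=
  codRestrict _ ((mkQ B).comp (E.comap f).subtype) fun c => by
    rw [mem_ker, fCB, comp_apply, mkQ_apply, mapQ_apply, Quotient.mk_eq_zero]
    exact c.2

theorem toE1C_surjective : Function.Surjective (toE1C f B E hfB) := by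
  rintro ⟨c, hc⟩
  obtain ⟨c, rfl⟩ := mkQ_surjective B c
  rw [mem_ker, fCB, mkQ_apply, mapQ_apply, Quotient.mk_eq_zero] at hc
  exact ⟨⟨c, hc⟩, rfl⟩

noncomputable def fRestrict (hd : g.comp f = 0) : ↥(E.comap f) →ₗ[R] ↥(E ⊓ G.comap g) :=
  f.restrict fun c hc => ⟨hc, by
    change g (f c) ∈ G
    rw [← comp_apply, hd, LinearMap.zero_apply]
    exact G.zero_mem⟩

theorem toE1E_mem_range_iff (hd : g.comp f = 0) (hDE : D ≤ E)
    (δC : E1C f B E hfB →ₗ[R] E1E f g A B D E G H hfB hfA hgE hgD)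
    (hC : ∀ c, δC (toE1C f B E hfB c) =
      toE1E f g A B D E G H hfB hfA hgE hgD (fRestrict f g E G hd c))
    (y : ↥(E ⊓ G.comap g)) :
    toE1E f g A B D E G H hfB hfA hgE hgD y ∈ range δC ↔ (y : M₂) ∈ D ⊔ range f := by
  rw [← range_comp_of_range_eq_top _ (range_eq_top.2 (toE1C_surjective f B E hfB)),
    (LinearMap.ext hC : δC ∘ₗ toE1C f B E hfB =
      toE1E f g A B D E G H hfB hfA hgE hgD ∘ₗ fRestrict f g E G hd)]
  constructor
  · rintro ⟨c, hc⟩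
    have hyc : toE1E f g A B D E G H hfB hfA hgE hgD (y - fRestrict f g E G hd c) = 0 := by
      rw [map_sub, ← comp_apply, hc, sub_self]
    rw [toE1E_eq_zero_iff] at hyc
    have hy : (y : M₂) = ((y - fRestrict f g E G hd c : ↥(E ⊓ G.comap g)) : M₂) + f c :=
      (sub_add_cancel (y : M₂) (f c)).symm
    rw [hy]
    exact add_mem (sup_le_sup_left (map_le_range (f := f)) D hyc)
      (mem_sup_right (mem_range_self f c))
  · rw [mem_sup]
    rintro ⟨x, hx, _, ⟨c, rfl⟩, hy⟩
    have hc : f c ∈ E := by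
      rw [eq_sub_of_add_eq' hy]
      exact sub_mem y.2.1 (hDE hx)
    refine ⟨⟨c, hc⟩, ?_⟩
    rw [comp_apply, ← sub_eq_zero, ← map_sub, toE1E_eq_zero_iff]
    refine mem_sup_left ?_
    change f c - (y : M₂) ∈ D
    simpa [← hy] using D.neg_mem hx

theorem mk_mem_S2_iff (hd : g.comp f = 0) (z : ker g) :
    (Submodule.Quotient.mk z : HCFI f g) ∈ S2 f g D ↔ (z : M₂) ∈ D ⊔ range f := by
  constructor
  · rintro ⟨w, hw, hwz⟩
    obtain ⟨c, hc⟩ := (Submodule.Quotient.eq _).1 hwz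
    have hz : (z : M₂) = w - f c := by simp [hc]
    rw [hz]
    exact sub_mem (mem_sup_left hw) (mem_sup_right (mem_range_self f c))
  · rw [mem_sup]
    rintro ⟨x, hx, _, ⟨c, rfl⟩, hz⟩
    have hfc : f c ∈ ker g := by rw [mem_ker, ← comp_apply, hd, LinearMap.zero_apply]
    refine ⟨z - ⟨f c, hfc⟩, by simpa [← hz] using hx, (Submodule.Quotient.eq _).2 ⟨-c, by simp⟩⟩

noncomputable def cyclesToHomology
    (δC : E1C f B E hfB →ₗ[R] E1E f g A B D E G H hfB hfA hgE hgD)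
    (δE : E1E f g A B D E G H hfB hfA hgE hgD →ₗ[R] E1G g D G)
    (hE : ∀ y, δE (toE1E f g A B D E G H hfB hfA hgE hgD y) = toE1G g D E G y) :
    ↥(E ⊓ ker g) →ₗ[R] ↥(ker δE) ⧸ (range δC).comap (ker δE).subtype :=
  (mkQ _).comp <| codRestrict _
    ((toE1E f g A B D E G H hfB hfA hgE hgD).comp
      (inclusion (inf_le_inf_left E (ker_le_comap g))))
    fun z => by
      rw [mem_ker, comp_apply, hE, toE1G_eq_zero_iff]
      exact ⟨0, D.zero_mem, (map_zero g).trans (mem_ker.1 z.2.2).symm⟩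

theorem cyclesToHomology_surjective (hDE : D ≤ E)
    (δC : E1C f B E hfB →ₗ[R] E1E f g A B D E G H hfB hfA hgE hgD)
    (δE : E1E f g A B D E G H hfB hfA hgE hgD →ₗ[R] E1G g D G)
    (hE : ∀ y, δE (toE1E f g A B D E G H hfB hfA hgE hgD y) = toE1G g D E G y) :
    Function.Surjective (cyclesToHomology f g A B D E G H hfB hfA hgE hgD δC δE hE) := by
  intro q
  obtain ⟨⟨q, hq⟩, rfl⟩ := mkQ_surjective _ q
  obtain ⟨y, rfl⟩ := toE1E_surjective f g A B D E G H hfB hfA hgE hgD q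
  rw [mem_ker, hE, toE1G_eq_zero_iff] at hq
  obtain ⟨x, hx, hgx⟩ := hq
  refine ⟨⟨y - x, sub_mem y.2.1 (hDE hx), by simp [hgx]⟩, congrArg (mkQ _) (Subtype.ext ?_)⟩
  rw [← sub_eq_zero]
  change toE1E f g A B D E G H hfB hfA hgE hgD _ - _ = 0
  rw [← map_sub, toE1E_eq_zero_iff]
  exact mem_sup_left (by simpa using D.neg_mem hx)

theorem cyclesToHomology_eq_zero_iff (hd : g.comp f = 0) (hDE : D ≤ E)
    (δC : E1C f B E hfB →ₗ[R] E1E f g A B D E G H hfB hfA hgE hgD)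
    (δE : E1E f g A B D E G H hfB hfA hgE hgD →ₗ[R] E1G g D G)
    (hC : ∀ c, δC (toE1C f B E hfB c) =
      toE1E f g A B D E G H hfB hfA hgE hgD (fRestrict f g E G hd c))
    (hE : ∀ y, δE (toE1E f g A B D E G H hfB hfA hgE hgD y) = toE1G g D E G y)
    (z : ↥(E ⊓ ker g)) :
    cyclesToHomology f g A B D E G H hfB hfA hgE hgD δC δE hE z = 0 ↔ (z : M₂) ∈ D ⊔ range f :=
  (Quotient.mk_eq_zero _).trans
    (toE1E_mem_range_iff f g A B D E G H hfB hfA hgE hgD hd hDE δC hC _)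

noncomputable def cyclesToEinfty : ↥(E ⊓ ker g) →ₗ[R] Einfty f g D E :=
  (mkQ _).comp <| codRestrict (S1 f g E) ((mkQ _).comp (inclusion inf_le_right)) fun z =>
    mem_map_of_mem z.2.1

theorem cyclesToEinfty_surjective : Function.Surjective (cyclesToEinfty f g D E) := by
  intro x
  obtain ⟨⟨_, z, hz, rfl⟩, rfl⟩ := mkQ_surjective _ x
  exact ⟨⟨z, hz, z.2⟩, rfl⟩

theorem cyclesToEinfty_eq_zero_iff (hd : g.comp f = 0) (z : ↥(E ⊓ ker g)) :
    cyclesToEinfty f g D E z = 0 ↔ (z : M₂) ∈ D ⊔ range f :=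
  (Quotient.mk_eq_zero _).trans (mk_mem_S2_iff f g D hd _)

end TT

open TT in
theorem stmt_16_general (R : Type) [CommRing R]
    (M₁ M₂ M₃ : Type)
    [AddCommGroup M₁] [AddCommGroup M₂] [AddCommGroup M₃]
    [Module R M₁] [Module R M₂] [Module R M₃]
    (f : M₁ →ₗ[R] M₂) (g : M₂ →ₗ[R] M₃) (hd : g.comp f = 0)
    (A B : Submodule R M₁) (D E : Submodule R M₂) (G H : Submodule R M₃)
    (hDE : D ≤ E)
    (hfA : ∀ x ∈ A, f x ∈ D) (hfB : ∀ x ∈ B, f x ∈ E)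
    (hgD : ∀ x ∈ D, g x ∈ G) (hgE : ∀ x ∈ E, g x ∈ H)
    (δC : E1C f B E hfB →ₗ[R] E1E f g A B D E G H hfB hfA hgE hgD)
    (δE : E1E f g A B D E G H hfB hfA hgE hgD →ₗ[R] E1G g D G)
    (hδC : ∀ (c : M₁) (hc : Submodule.Quotient.mk c ∈ LinearMap.ker (fCB f B E hfB))
        (hfc : f c ∈ E)
        (hker : (Submodule.Quotient.mk (⟨f c, hfc⟩ : ↥E) : QE D E) ∈
          LinearMap.ker (psi g D E G H hgE hgD)),
      δC ⟨Submodule.Quotient.mk c, hc⟩ =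
        Submodule.Quotient.mk
          (⟨Submodule.Quotient.mk (⟨f c, hfc⟩ : ↥E), hker⟩ :
            ↥(LinearMap.ker (psi g D E G H hgE hgD))))
    (hδE : ∀ (y : M₂) (hy : y ∈ E)
        (hq : (Submodule.Quotient.mk (⟨y, hy⟩ : ↥E) : QE D E) ∈
          LinearMap.ker (psi g D E G H hgE hgD))
        (hgy : g y ∈ G),
      δE (Submodule.Quotient.mk
          (⟨Submodule.Quotient.mk (⟨y, hy⟩ : ↥E), hq⟩ :
            ↥(LinearMap.ker (psi g D E G H hgE hgD)))) =
        Submodule.Quotient.mk (⟨g y, hgy⟩ : ↥G)) :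
    Nonempty
      ((↥(LinearMap.ker δE) ⧸
          ((LinearMap.range δC).comap (LinearMap.ker δE).subtype))
        ≃ₗ[R] Einfty f g D E) := by
  have hC : ∀ c, δC (toE1C f B E hfB c) =
      toE1E f g A B D E G H hfB hfA hgE hgD (fRestrict f g E G hd c) :=
    fun c => hδC c.1 _ c.2 _
  have hE : ∀ y, δE (toE1E f g A B D E G H hfB hfA hgE hgD y) = toE1G g D E G y :=
    fun y => hδE y.1 y.2.1 _ y.2.2
  refine LinearMap.nonempty_linearEquiv_of_surjective_of_ker_eq _ _
    (cyclesToHomology_surjective f g A B D E G H hfB hfA hgE hgD hDE δC δE hE)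
    (cyclesToEinfty_surjective f g D E) ?_
  ext z
  rw [LinearMap.mem_ker, LinearMap.mem_ker,
    cyclesToHomology_eq_zero_iff f g A B D E G H hfB hfA hgE hgD hd hDE δC δE hC hE,
    cyclesToEinfty_eq_zero_iff f g D E hd]

open TT in
/-- With notation as in the `3×3` diagram of inclusions with `d ∘ d = 0`, for
any differentials `δC : E₁ᶜ → E₁ᴱ` and `δE : E₁ᴱ → E₁ᴳ` induced by `d`, the
homology of `E₁ᶜ → E₁ᴱ → E₁ᴳ` at the middle term is isomorphic to
`E^E_∞ = Im(H(B→E→H) → H(C→F→I)) / Im(H(A→D→G) → H(C→F→I))`. -/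
theorem stmt_16 (R : Type) [CommRing R]
    (M₁ M₂ M₃ : Type)
    [AddCommGroup M₁] [AddCommGroup M₂] [AddCommGroup M₃]
    [Module R M₁] [Module R M₂] [Module R M₃]
    (f : M₁ →ₗ[R] M₂) (g : M₂ →ₗ[R] M₃) (hd : g.comp f = 0)
    (A B : Submodule R M₁) (D E : Submodule R M₂) (G H : Submodule R M₃)
    (hAB : A ≤ B) (hDE : D ≤ E) (hGH : G ≤ H)
    (hfA : ∀ x ∈ A, f x ∈ D) (hfB : ∀ x ∈ B, f x ∈ E)
    (hgD : ∀ x ∈ D, g x ∈ G) (hgE : ∀ x ∈ E, g x ∈ H)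
    (δC : E1C f B E hfB →ₗ[R] E1E f g A B D E G H hfB hfA hgE hgD)
    (δE : E1E f g A B D E G H hfB hfA hgE hgD →ₗ[R] E1G g D G)
    (hδC : ∀ (c : M₁) (hc : Submodule.Quotient.mk c ∈ LinearMap.ker (fCB f B E hfB))
        (hfc : f c ∈ E)
        (hker : (Submodule.Quotient.mk (⟨f c, hfc⟩ : ↥E) : QE D E) ∈
          LinearMap.ker (psi g D E G H hgE hgD)),
      δC ⟨Submodule.Quotient.mk c, hc⟩ =
        Submodule.Quotient.mk
          (⟨Submodule.Quotient.mk (⟨f c, hfc⟩ : ↥E), hker⟩ :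
            ↥(LinearMap.ker (psi g D E G H hgE hgD))))
    (hδE : ∀ (y : M₂) (hy : y ∈ E)
        (hq : (Submodule.Quotient.mk (⟨y, hy⟩ : ↥E) : QE D E) ∈
          LinearMap.ker (psi g D E G H hgE hgD))
        (hgy : g y ∈ G),
      δE (Submodule.Quotient.mk
          (⟨Submodule.Quotient.mk (⟨y, hy⟩ : ↥E), hq⟩ :
            ↥(LinearMap.ker (psi g D E G H hgE hgD)))) =
        Submodule.Quotient.mk (⟨g y, hgy⟩ : ↥G)) :
    Nonempty
      ((↥(LinearMap.ker δE) ⧸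
          ((LinearMap.range δC).comap (LinearMap.ker δE).subtype))
        ≃ₗ[R] Einfty f g D E) :=
  stmt_16_general R M₁ M₂ M₃ f g hd A B D E G H hDE hfA hfB hgD hgE δC δE hδC hδE
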